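/- For every H ∈ (0,1], every n ∈ ℕ, all real numbers t_1,…,t_n and all real coefficients c_1,…,c_n with Σ_{i=1}^n c_i = 0, one has Σ_{i=1}^n Σ_{j=1}^n c_i c_j |t_i − t_j|^{2H} ≤ 0; that is, the kernel (t,s) ↦ |t−s|^{2H} is negative definite on ℝ. -/

import Mathlib

/-! For `0 < α < 2` the substitution `v = |x| u` gives
`∫₀^∞ (1 - cos (x u)) u ^ (-(1 + α)) du = C |x| ^ α` with `0 < C < ∞`, so the quadratic form of
`|tᵢ - tⱼ| ^ α` is a positive average over `u` of those of `1 - cos ((tᵢ - tⱼ) u)`. On coefficients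
summing to zero each of these equals `-|∑ᵢ cᵢ e^{i tᵢ u}|² ≤ 0`. For `α = 2` the form is
`-2 (∑ᵢ cᵢ tᵢ)²`. -/

open MeasureTheory Real Set Finset

section Quadratic

variable {ι : Type*} [Fintype ι] (c : ι → ℝ)

theorem sum_sum_mul_one_sub_cos_sub_nonpos (hc : ∑ i, c i = 0) (a : ι → ℝ) :
    ∑ i, ∑ j, c i * c j * (1 - cos (a i - a j)) ≤ 0 := by
  have h : ∑ i, ∑ j, c i * c j * (1 - cos (a i - a j)) =
      (∑ i, c i) ^ 2 - (∑ i, c i * cos (a i)) ^ 2 - (∑ i, c i * sin (a i)) ^ 2 := by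
    simp only [sq, sum_mul_sum, ← sum_sub_distrib, cos_sub]
    exact sum_congr rfl fun i _ => sum_congr rfl fun j _ => by ring
  rw [h, hc]
  nlinarith [sq_nonneg (∑ i, c i * cos (a i)), sq_nonneg (∑ i, c i * sin (a i))]

theorem sum_sum_mul_sub_sq (hc : ∑ i, c i = 0) (t : ι → ℝ) :
    ∑ i, ∑ j, c i * c j * (t i - t j) ^ 2 = -2 * (∑ i, c i * t i) ^ 2 := by
  have h : ∑ i, ∑ j, c i * c j * (t i - t j) ^ 2 =
      ∑ i, ∑ j, (c i * t i ^ 2 * c j + c i * (c j * t j ^ 2) - 2 * (c i * t i) * (c j * t j)) :=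
    sum_congr rfl fun i _ => sum_congr rfl fun j _ => by ring
  simp only [h, sum_add_distrib, sum_sub_distrib, ← mul_sum, ← sum_mul, hc]
  ring

end Quadratic

section LevyIntegral

variable {α : ℝ}

theorem integrableOn_one_sub_cos_mul_mul_rpow (hα0 : 0 < α) (hα2 : α < 2) (x : ℝ) :
    IntegrableOn (fun u => (1 - cos (x * u)) * u ^ (-(1 + α))) (Ioi 0) := by
  have hmeas : AEStronglyMeasurable (fun u => (1 - cos (x * u)) * u ^ (-(1 + α))) :=
    (by fun_prop : Measurable fun u => (1 - cos (x * u)) * u ^ (-(1 + α))).aestronglyMeasurable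
  have hnear : IntegrableOn (fun u => (1 - cos (x * u)) * u ^ (-(1 + α))) (Ioc 0 1) := by
    have hdom : IntegrableOn (fun u => x ^ 2 / 2 * u ^ (1 - α)) (Ioc 0 1) :=
      ((intervalIntegrable_iff_integrableOn_Ioc_of_le zero_le_one).1
        (intervalIntegral.intervalIntegrable_rpow' (by linarith))).const_mul _
    refine hdom.mono' hmeas.restrict (ae_restrict_of_forall_mem measurableSet_Ioc fun u hu => ?_)
    have hu : 0 < u := hu.1
    rw [norm_of_nonneg (mul_nonneg (by linarith [cos_le_one (x * u)]) (rpow_nonneg hu.le _))]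
    calc (1 - cos (x * u)) * u ^ (-(1 + α)) ≤ (x * u) ^ 2 / 2 * u ^ (-(1 + α)) := by
          gcongr; linarith [one_sub_sq_div_two_le_cos (x := x * u)]
      _ = x ^ 2 / 2 * u ^ (1 - α) := by
          rw [show 1 - α = 2 + -(1 + α) by ring, rpow_add hu, rpow_two]; ring
  have hfar : IntegrableOn (fun u => (1 - cos (x * u)) * u ^ (-(1 + α))) (Ioi 1) := by
    refine ((integrableOn_Ioi_rpow_of_lt (a := -(1 + α)) (by linarith) one_pos).const_mul 2).mono'
      hmeas.restrict (ae_restrict_of_forall_mem measurableSet_Ioi fun u hu => ?_)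
    have hu : (0 : ℝ) ≤ u := zero_le_one.trans (le_of_lt hu)
    rw [norm_of_nonneg (mul_nonneg (by linarith [cos_le_one (x * u)]) (rpow_nonneg hu _))]
    gcongr
    linarith [neg_one_le_cos (x * u)]
  simpa [Ioc_union_Ioi_eq_Ioi zero_le_one] using hnear.union hfar

theorem integral_one_sub_cos_mul_rpow_pos (hα0 : 0 < α) (hα2 : α < 2) :
    0 < ∫ v in Ioi 0, (1 - cos v) * v ^ (-(1 + α)) := by
  have hint := integrableOn_one_sub_cos_mul_mul_rpow hα0 hα2 1
  simp only [one_mul] at hint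
  rw [setIntegral_pos_iff_support_of_nonneg_ae
    (ae_restrict_of_forall_mem measurableSet_Ioi fun v hv =>
      mul_nonneg (by linarith [cos_le_one v]) (rpow_nonneg (le_of_lt hv) _)) hint]
  have hsub : Ioo 0 (2 * π) ⊆ Function.support (fun v => (1 - cos v) * v ^ (-(1 + α))) ∩ Ioi 0 :=
    fun v hv => ⟨mul_ne_zero (sub_ne_zero.2 fun h => hv.1.ne'
      ((cos_eq_one_iff_of_lt_of_lt (by linarith [hv.1, pi_pos]) hv.2).1 h.symm))
      (rpow_pos_of_pos hv.1 _).ne', hv.1⟩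
  exact (by simp [pi_pos] : 0 < volume (Ioo 0 (2 * π))).trans_le (measure_mono hsub)

theorem integral_one_sub_cos_mul_mul_rpow (hα : α ≠ 0) (x : ℝ) :
    ∫ u in Ioi 0, (1 - cos (x * u)) * u ^ (-(1 + α)) =
      |x| ^ α * ∫ v in Ioi 0, (1 - cos v) * v ^ (-(1 + α)) := by
  rcases eq_or_ne x 0 with rfl | hx
  · simp [zero_rpow hα]
  have hx : 0 < |x| := abs_pos.2 hx
  calc ∫ u in Ioi 0, (1 - cos (x * u)) * u ^ (-(1 + α))
      = ∫ u in Ioi 0, |x| ^ (1 + α) * ((1 - cos (|x| * u)) * (|x| * u) ^ (-(1 + α))) := by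
        refine setIntegral_congr_fun measurableSet_Ioi fun u hu => ?_
        have hu : 0 < u := hu
        have hone : |x| ^ (1 + α) * |x| ^ (-(1 + α)) = 1 := by
          rw [← rpow_add hx, add_neg_cancel, rpow_zero]
        rw [← cos_abs (x * u), abs_mul, abs_of_pos hu, mul_rpow hx.le hu.le]
        linear_combination -((1 - cos (|x| * u)) * u ^ (-(1 + α))) * hone
    _ = |x| ^ (1 + α) * |x|⁻¹ * ∫ v in Ioi 0, (1 - cos v) * v ^ (-(1 + α)) := by
        rw [integral_const_mul, integral_comp_mul_left_Ioi (fun v => (1 - cos v) * v ^ (-(1 + α)))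
          0 hx, mul_zero, smul_eq_mul, mul_assoc]
    _ = |x| ^ α * ∫ v in Ioi 0, (1 - cos v) * v ^ (-(1 + α)) := by
        rw [add_comm, rpow_add_one hx.ne', mul_inv_cancel_right₀ hx.ne']

end LevyIntegral

section NegDef

variable {ι : Type*} [Fintype ι] {α : ℝ} (c : ι → ℝ)

theorem sum_sum_mul_abs_sub_rpow_nonpos_of_lt_two (hα0 : 0 < α) (hα2 : α < 2)
    (hc : ∑ i, c i = 0) (t : ι → ℝ) :
    ∑ i, ∑ j, c i * c j * |t i - t j| ^ α ≤ 0 := by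
  have hint : ∀ i j, IntegrableOn
      (fun u => c i * c j * ((1 - cos ((t i - t j) * u)) * u ^ (-(1 + α)))) (Ioi 0) :=
    fun i j => (integrableOn_one_sub_cos_mul_mul_rpow hα0 hα2 _).const_mul _
  have hform : (∑ i, ∑ j, c i * c j * |t i - t j| ^ α) *
        ∫ v in Ioi 0, (1 - cos v) * v ^ (-(1 + α)) =
      ∫ u in Ioi 0, (∑ i, ∑ j, c i * c j * (1 - cos (t i * u - t j * u))) * u ^ (-(1 + α)) :=
    calc _ = ∑ i, ∑ j, ∫ u in Ioi 0,
          c i * c j * ((1 - cos ((t i - t j) * u)) * u ^ (-(1 + α))) := by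
          simp only [sum_mul, integral_const_mul, integral_one_sub_cos_mul_mul_rpow hα0.ne',
            mul_assoc]
      _ = ∫ u in Ioi 0, ∑ i, ∑ j, c i * c j * ((1 - cos ((t i - t j) * u)) * u ^ (-(1 + α))) := by
          rw [integral_finsetSum _ fun i _ => integrable_finsetSum _ fun j _ => hint i j]
          exact sum_congr rfl fun i _ => (integral_finsetSum _ fun j _ => hint i j).symm
      _ = _ := by simp only [sum_mul, sub_mul, mul_assoc]
  refine nonpos_of_mul_nonpos_left ?_ (integral_one_sub_cos_mul_rpow_pos hα0 hα2)
  rw [hform]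
  exact setIntegral_nonpos measurableSet_Ioi fun u hu =>
    mul_nonpos_of_nonpos_of_nonneg (sum_sum_mul_one_sub_cos_sub_nonpos c hc _)
      (rpow_nonneg (le_of_lt hu) _)

theorem sum_sum_mul_abs_sub_rpow_nonpos (hα0 : 0 < α) (hα2 : α ≤ 2)
    (hc : ∑ i, c i = 0) (t : ι → ℝ) :
    ∑ i, ∑ j, c i * c j * |t i - t j| ^ α ≤ 0 := by
  rcases hα2.lt_or_eq with hα2 | rfl
  · exact sum_sum_mul_abs_sub_rpow_nonpos_of_lt_two c hα0 hα2 hc t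
  · simp only [rpow_two, sq_abs, sum_sum_mul_sub_sq c hc]
    nlinarith [sq_nonneg (∑ i, c i * t i)]

end NegDef

/-- For `H ∈ (0,1]`, the kernel `(t,s) ↦ |t−s|^{2H}` is negative definite on `ℝ`:
for all coefficients summing to zero, the associated quadratic form is nonpositive. -/
theorem abs_rpow_negDef (H : ℝ) (hH : H ∈ Set.Ioc (0 : ℝ) 1)
    (n : ℕ) (t : Fin n → ℝ) (c : Fin n → ℝ) (hc : ∑ i, c i = 0) :
    ∑ i, ∑ j, c i * c j * |t i - t j| ^ (2 * H) ≤ 0 :=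
  sum_sum_mul_abs_sub_rpow_nonpos c (by linarith [hH.1]) (by linarith [hH.2]) hc t
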